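/- Let a < b, and for each n ∈ ℕ let u_n ∈ C¹([a,b], ℝ). Assume there exists g > 0 such that for all n ≠ m, the function x ↦ |u_n'(x) − u_m'(x)| is monotone on [a,b] and bounded below by g. Then for Lebesgue almost every x ∈ [a,b], the sequence (u_n(x)) is uniformly distributed modulo 1. -/

import Mathlib

open Filter MeasureTheory Set
open scoped Topology

noncomputable def weylAvg (u : ℕ → ℝ) (N : ℕ) : ℂ :=
  (N : ℂ)⁻¹ * ∑ n ∈ Finset.Icc 1 N, Complex.exp (2 * Real.pi * Complex.I * (u n : ℂ))

/-- Weyl criterion: `(u n)` is uniformly distributed mod 1. -/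
def UDmod1 (u : ℕ → ℝ) : Prop :=
  ∀ k : ℤ, k ≠ 0 → Tendsto (fun N => weylAvg (fun n => (k : ℝ) * u n) N) atTop (nhds 0)

noncomputable def scatterSum (a : ℕ → ℝ) (δ : ℝ) (N : ℕ) : ℝ :=
  ((N : ℝ) ^ 2)⁻¹ * ∑ n ∈ Finset.Icc 1 N, ∑ m ∈ Finset.Ico 1 n,
    (if a n = a m then 1 else min (|a n - a m| ^ (-δ)) 1)

def IsDeltaScattered (a : ℕ → ℝ) (δ : ℝ) : Prop :=
  ∃ ε > 0, ∀ᶠ N : ℕ in atTop, scatterSum a δ N ≤ ((Real.log N) ^ ((1 : ℝ) + ε))⁻¹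

def IsScattered (a : ℕ → ℝ) : Prop := ∀ δ : ℝ, 0 < δ → δ ≤ 1 → IsDeltaScattered a δ

/-!
Fix `k ≠ 0` and let `W_N(x)` be the Weyl average of `(k u_n(x))`. Expanding the square,
`∫ₐᵇ |W_N|² = N⁻² ∑_{n,m} ∫ₐᵇ e(k (u_n - u_m))`. The phase derivative `k (u_n' - u_m')` has monotone
modulus, so van der Corput's first derivative test bounds each off-diagonal integral by
`|u_n'(a) - u_m'(a)|⁻¹ + |u_n'(b) - u_m'(b)|⁻¹`, and since the values `u_m'(c)` are `g`-separated,
every row sum is `O(√N / g)`. Hence `∫ₐᵇ |W_N|² = O(N^{-1/2})`, which is summable along `N = M⁴`,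
so `W_{M⁴}(x) → 0` for almost every `x`; between consecutive fourth powers `W_N` moves by at most
`1 - M⁴ / (M + 1)⁴ → 0`.
-/

open Complex intervalIntegral
open scoped Real ComplexConjugate

section VanDerCorput

variable {a b : ℝ}

theorem integral_eq_sub_of_hasDerivWithinAt_Icc {E : Type*} [NormedAddCommGroup E]
    [NormedSpace ℝ E] [CompleteSpace E] {f f' : ℝ → E} (hab : a ≤ b)
    (hf : ∀ x ∈ Icc a b, HasDerivWithinAt f (f' x) (Icc a b) x)
    (hf' : ContinuousOn f' (Icc a b)) :
    ∫ x in a..b, f' x = f b - f a :=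
  integral_eq_sub_of_hasDeriv_right_of_le hab (fun x hx => (hf x hx).continuousWithinAt)
    (fun x hx => ((hf x (Ioo_subset_Icc_self hx)).hasDerivAt
      (Icc_mem_nhds hx.1 hx.2)).hasDerivWithinAt)
    (hf'.intervalIntegrable_of_Icc hab)

variable {F F' : ℝ → ℝ}

theorem continuousOn_cexp_mul_I {s : Set ℝ} (hF : ∀ x ∈ s, HasDerivWithinAt F (F' x) s x) :
    ContinuousOn (fun x => cexp (F x * I)) s :=
  (continuous_ofReal.comp_continuousOn fun x hx => (hF x hx).continuousWithinAt).mul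
    continuousOn_const |>.cexp

theorem integral_deriv_mul_cexp_mul_I (hab : a ≤ b)
    (hF : ∀ x ∈ Icc a b, HasDerivWithinAt F (F' x) (Icc a b) x)
    (hF' : ContinuousOn F' (Icc a b)) :
    ∫ x in a..b, (F' x : ℂ) * cexp (F x * I) = -I * (cexp (F b * I) - cexp (F a * I)) := by
  have hcont := continuousOn_cexp_mul_I hF
  rw [mul_sub]
  refine integral_eq_sub_of_hasDerivWithinAt_Icc (f := fun x => -I * cexp (F x * I)) hab
    (fun x hx => ?_) ((continuous_ofReal.comp_continuousOn hF').mul hcont)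
  refine (((hF x hx).ofReal_comp.mul_const I).cexp.const_mul (-I)).congr_deriv ?_
  linear_combination (-(F' x : ℂ) * cexp (F x * I)) * I_sq

theorem mul_sub_le_sub_of_antitoneOn_deriv (hab : a ≤ b)
    (hF : ∀ x ∈ Icc a b, HasDerivWithinAt F (F' x) (Icc a b) x)
    (hF' : ContinuousOn F' (Icc a b)) (hanti : AntitoneOn F' (Icc a b)) :
    F' b * (b - a) ≤ F b - F a := by
  rw [← integral_eq_sub_of_hasDerivWithinAt_Icc hab hF hF', mul_comm]
  simpa using integral_mono_on hab (intervalIntegrable_const (μ := volume))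
    (hF'.intervalIntegrable_of_Icc hab)
    fun x hx => hanti hx (right_mem_Icc.2 hab) hx.2

theorem norm_integral_cexp_mul_I_le_sub (hab : a ≤ b) :
    ‖∫ x in a..b, cexp (F x * I)‖ ≤ b - a := by
  simpa [abs_of_nonneg (sub_nonneg.2 hab)] using
    norm_integral_le_of_norm_le_const (a := a) (b := b) (C := 1)
      fun x _ => (norm_exp_ofReal_mul_I (F x)).le

theorem norm_integral_cexp_mul_I_le_of_sub_le_two_pi (hab : a ≤ b)
    (hF : ∀ x ∈ Icc a b, HasDerivWithinAt F (F' x) (Icc a b) x)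
    (hF' : ContinuousOn F' (Icc a b)) (hanti : AntitoneOn F' (Icc a b)) (hpos : 0 < F' b)
    (hshort : F b - F a ≤ 2 * π) :
    ‖∫ x in a..b, cexp (F x * I)‖ ≤ 2 * π * (2 / F' b - 1 / F' a) := by
  have hlen : b - a ≤ 2 * π / F' b := by
    rw [le_div_iff₀ hpos, mul_comm]
    exact (mul_sub_le_sub_of_antitoneOn_deriv hab hF hF' hanti).trans hshort
  have hinv : 1 / F' a ≤ 1 / F' b :=
    one_div_le_one_div_of_le hpos (hanti (left_mem_Icc.2 hab) (right_mem_Icc.2 hab) hab)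
  calc ‖∫ x in a..b, cexp (F x * I)‖ ≤ b - a := norm_integral_cexp_mul_I_le_sub hab
    _ ≤ 2 * π / F' b := hlen
    _ ≤ 2 * π / F' b + 2 * π * (1 / F' b - 1 / F' a) :=
      le_add_of_nonneg_right (mul_nonneg Real.two_pi_pos.le (sub_nonneg.2 hinv))
    _ = 2 * π * (2 / F' b - 1 / F' a) := by ring

/-- Over one full turn of `F`, the integral of `F' x * exp (F x * I)` vanishes, so only the
variation of `F'` contributes. -/
theorem norm_integral_cexp_mul_I_le_of_sub_eq_two_pi (hab : a ≤ b)
    (hF : ∀ x ∈ Icc a b, HasDerivWithinAt F (F' x) (Icc a b) x)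
    (hF' : ContinuousOn F' (Icc a b)) (hanti : AntitoneOn F' (Icc a b)) (hpos : 0 < F' b)
    (hturn : F b - F a = 2 * π) :
    ‖∫ x in a..b, cexp (F x * I)‖ ≤ 2 * π * (1 / F' b - 1 / F' a) := by
  have ha : 0 < F' a := hpos.trans_le (hanti (left_mem_Icc.2 hab) (right_mem_Icc.2 hab) hab)
  have hexp : cexp (F b * I) = cexp (F a * I) := by
    rw [show F b = F a + 2 * π by linarith]
    push_cast
    rw [add_mul, exp_add, exp_two_pi_mul_I, mul_one]
  have hcont := continuousOn_cexp_mul_I hF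
  have hweight : ContinuousOn (fun x => 1 - F' x / F' a) (Icc a b) :=
    continuousOn_const.sub (hF'.div_const _)
  have hrewrite : ∫ x in a..b, cexp (F x * I)
      = ∫ x in a..b, ((1 - F' x / F' a : ℝ) : ℂ) * cexp (F x * I) := by
    have hzero : ∫ x in a..b, ((F' x / F' a : ℝ) : ℂ) * cexp (F x * I) = 0 := by
      simp_rw [ofReal_div, div_mul_eq_mul_div, intervalIntegral.integral_div,
        integral_deriv_mul_cexp_mul_I hab hF hF', hexp, sub_self, mul_zero, zero_div]
    simp_rw [ofReal_sub, ofReal_one, sub_mul, one_mul]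
    rw [intervalIntegral.integral_sub (hcont.intervalIntegrable_of_Icc hab), hzero, sub_zero]
    exact ((continuous_ofReal.comp_continuousOn (hF'.div_const _)).mul hcont)
      |>.intervalIntegrable_of_Icc hab
  have hnorm : ‖∫ x in a..b, ((1 - F' x / F' a : ℝ) : ℂ) * cexp (F x * I)‖
      ≤ ∫ x in a..b, (1 - F' x / F' a) := by
    refine norm_integral_le_of_norm_le hab (ae_of_all _ fun x hx => ?_)
      (hweight.intervalIntegrable_of_Icc hab)
    have hle : F' x ≤ F' a := hanti (left_mem_Icc.2 hab) (Ioc_subset_Icc_self hx) hx.1.le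
    rw [norm_mul, norm_exp_ofReal_mul_I, mul_one, norm_real,
      Real.norm_of_nonneg (sub_nonneg.2 ((div_le_one ha).2 hle))]
  have hweight_int : ∫ x in a..b, (1 - F' x / F' a) = (b - a) - 2 * π / F' a := by
    rw [intervalIntegral.integral_sub intervalIntegrable_const
      ((hF'.div_const _).intervalIntegrable_of_Icc hab), intervalIntegral.integral_div,
      integral_eq_sub_of_hasDerivWithinAt_Icc hab hF hF', hturn]
    simp
  have hlen : b - a ≤ 2 * π / F' b := by
    rw [le_div_iff₀ hpos, mul_comm, ← hturn]
    exact mul_sub_le_sub_of_antitoneOn_deriv hab hF hF' hanti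
  rw [hrewrite]
  refine hnorm.trans ?_
  rw [hweight_int]
  have : 2 * π * (1 / F' b - 1 / F' a) = 2 * π / F' b - 2 * π / F' a := by ring
  linarith

/-- Split off one full turn `[a, m]`, `F m = F a + 2 * π`, at a time: the bounds
`2 * π * (1 / F' m - 1 / F' a)` telescope. -/
theorem norm_integral_cexp_mul_I_le_of_sub_le_two_pi_mul (n : ℕ) (hab : a ≤ b)
    (hF : ∀ x ∈ Icc a b, HasDerivWithinAt F (F' x) (Icc a b) x)
    (hF' : ContinuousOn F' (Icc a b)) (hanti : AntitoneOn F' (Icc a b)) (hpos : 0 < F' b)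
    (hn : F b - F a ≤ 2 * π * n) :
    ‖∫ x in a..b, cexp (F x * I)‖ ≤ 2 * π * (2 / F' b - 1 / F' a) := by
  induction n generalizing a with
  | zero =>
    refine norm_integral_cexp_mul_I_le_of_sub_le_two_pi hab hF hF' hanti hpos ?_
    simp only [CharP.cast_eq_zero, mul_zero] at hn
    linarith [Real.pi_pos]
  | succ n ih =>
    rcases le_or_gt (F b - F a) (2 * π) with hshort | hlong
    · exact norm_integral_cexp_mul_I_le_of_sub_le_two_pi hab hF hF' hanti hpos hshort
    obtain ⟨m, ⟨ham, hmb⟩, hm⟩ : ∃ m ∈ Icc a b, F m = F a + 2 * π :=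
      intermediate_value_Icc hab (fun x hx => (hF x hx).continuousWithinAt)
        ⟨by linarith [Real.pi_pos], by linarith⟩
    have hsub_left : Icc a m ⊆ Icc a b := Icc_subset_Icc le_rfl hmb
    have hsub_right : Icc m b ⊆ Icc a b := Icc_subset_Icc ham le_rfl
    have hcont := continuousOn_cexp_mul_I hF
    have hturn := norm_integral_cexp_mul_I_le_of_sub_eq_two_pi ham
      (fun x hx => (hF x (hsub_left hx)).mono hsub_left) (hF'.mono hsub_left)
      (hanti.mono hsub_left) (hpos.trans_le (hanti ⟨ham, hmb⟩ (right_mem_Icc.2 hab) hmb))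
      (by linarith)
    have hrest := ih hmb (fun x hx => (hF x (hsub_right hx)).mono hsub_right)
      (hF'.mono hsub_right) (hanti.mono hsub_right) (by push_cast at hn; linarith)
    rw [← integral_add_adjacent_intervals ((hcont.mono hsub_left).intervalIntegrable_of_Icc ham)
      ((hcont.mono hsub_right).intervalIntegrable_of_Icc hmb)]
    refine (norm_add_le _ _).trans ?_
    linarith

theorem norm_integral_cexp_mul_I_le_of_antitoneOn (hab : a ≤ b)
    (hF : ∀ x ∈ Icc a b, HasDerivWithinAt F (F' x) (Icc a b) x)
    (hF' : ContinuousOn F' (Icc a b)) (hanti : AntitoneOn F' (Icc a b)) (hpos : 0 < F' b) :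
    ‖∫ x in a..b, cexp (F x * I)‖ ≤ 4 * π / F' b := by
  obtain ⟨n, hn⟩ := exists_nat_ge ((F b - F a) / (2 * π))
  refine (norm_integral_cexp_mul_I_le_of_sub_le_two_pi_mul n hab hF hF' hanti hpos
    (by rwa [div_le_iff₀ (by positivity), mul_comm] at hn)).trans ?_
  have ha : 0 < 1 / F' a :=
    one_div_pos.2 (hpos.trans_le (hanti (left_mem_Icc.2 hab) (right_mem_Icc.2 hab) hab))
  have : 4 * π / F' b = 2 * π * (2 / F' b) := by ring
  rw [this]
  gcongr
  linarith

theorem norm_integral_cexp_neg_mul_I (F : ℝ → ℝ) (hab : a ≤ b) :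
    ‖∫ x in a..b, cexp ((-F x : ℝ) * I)‖ = ‖∫ x in a..b, cexp (F x * I)‖ := by
  have hconj : ∀ x, cexp ((-F x : ℝ) * I) = conj (cexp (F x * I)) := fun x => by
    rw [← exp_conj, map_mul, conj_ofReal, conj_I, ofReal_neg, neg_mul, mul_neg]
  simp_rw [hconj, integral_of_le hab, integral_conj, RCLike.norm_conj]

theorem ContinuousOn.forall_pos_or_forall_neg {f : ℝ → ℝ} (hf : ContinuousOn f (Icc a b))
    (hne : ∀ x ∈ Icc a b, f x ≠ 0) :
    (∀ x ∈ Icc a b, 0 < f x) ∨ (∀ x ∈ Icc a b, f x < 0) := by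
  by_contra! h
  obtain ⟨⟨x, hx, hfx⟩, ⟨y, hy, hfy⟩⟩ := h
  have hsub : uIcc x y ⊆ Icc a b := uIcc_subset_Icc hx hy
  obtain ⟨z, hz, hfz⟩ :=
    intermediate_value_uIcc (hf.mono hsub) (mem_uIcc.2 (Or.inl ⟨hfx, hfy⟩))
  exact hne z (hsub hz) hfz

theorem norm_integral_cexp_mul_I_le_of_antitoneOn_abs (hab : a ≤ b)
    (hF : ∀ x ∈ Icc a b, HasDerivWithinAt F (F' x) (Icc a b) x)
    (hF' : ContinuousOn F' (Icc a b)) (hanti : AntitoneOn (fun x => |F' x|) (Icc a b))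
    (hpos : 0 < |F' b|) :
    ‖∫ x in a..b, cexp (F x * I)‖ ≤ 4 * π / |F' b| := by
  have hne : ∀ x ∈ Icc a b, F' x ≠ 0 := fun x hx =>
    abs_pos.1 (hpos.trans_le (hanti hx (right_mem_Icc.2 hab) hx.2))
  rcases hF'.forall_pos_or_forall_neg hne with hsign | hsign
  · have habs : ∀ x ∈ Icc a b, |F' x| = F' x := fun x hx => abs_of_pos (hsign x hx)
    rw [habs b (right_mem_Icc.2 hab)] at hpos ⊢
    exact norm_integral_cexp_mul_I_le_of_antitoneOn hab hF hF'
      (fun x hx y hy hxy => by simpa only [habs x hx, habs y hy] using hanti hx hy hxy) hpos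
  · have habs : ∀ x ∈ Icc a b, |F' x| = -F' x := fun x hx => abs_of_neg (hsign x hx)
    rw [habs b (right_mem_Icc.2 hab)] at hpos ⊢
    rw [← norm_integral_cexp_neg_mul_I F hab]
    exact norm_integral_cexp_mul_I_le_of_antitoneOn hab (fun x hx => (hF x hx).neg) hF'.neg
      (fun x hx y hy hxy => by simpa only [habs x hx, habs y hy] using hanti hx hy hxy) hpos

/-- The reflection `x ↦ a + b - x` reduces an increasing `|F'|` to a decreasing one. -/
theorem norm_integral_cexp_mul_I_le_of_monotoneOn_abs (hab : a ≤ b)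
    (hF : ∀ x ∈ Icc a b, HasDerivWithinAt F (F' x) (Icc a b) x)
    (hF' : ContinuousOn F' (Icc a b)) (hmono : MonotoneOn (fun x => |F' x|) (Icc a b))
    (hpos : 0 < |F' a|) :
    ‖∫ x in a..b, cexp (F x * I)‖ ≤ 4 * π / |F' a| := by
  have hrefl : MapsTo (fun x => a + b - x) (Icc a b) (Icc a b) := fun x hx =>
    ⟨by linarith [hx.2], by linarith [hx.1]⟩
  have hG : ∀ x ∈ Icc a b, HasDerivWithinAt (fun x => F (a + b - x)) (-F' (a + b - x))
      (Icc a b) x := fun x hx => by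
    simpa [Function.comp_def] using (hF _ (hrefl hx)).comp x
      ((hasDerivAt_id x).const_sub (a + b)).hasDerivWithinAt hrefl
  have hbound := norm_integral_cexp_mul_I_le_of_antitoneOn_abs hab hG
    (hF'.comp (continuous_const.sub continuous_id).continuousOn hrefl).neg
    (fun x hx y hy hxy => by
      simpa only [abs_neg] using hmono (hrefl hy) (hrefl hx) (by linarith))
    (by simpa using hpos)
  simpa [intervalIntegral.integral_comp_sub_left fun x => cexp (F x * I)] using hbound

/-- Van der Corput's first derivative test. -/
theorem norm_integral_cexp_mul_I_le (hab : a ≤ b)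
    (hF : ∀ x ∈ Icc a b, HasDerivWithinAt F (F' x) (Icc a b) x)
    (hF' : ContinuousOn F' (Icc a b))
    (hmono : MonotoneOn (fun x => |F' x|) (Icc a b) ∨ AntitoneOn (fun x => |F' x|) (Icc a b))
    (ha : 0 < |F' a|) (hb : 0 < |F' b|) :
    ‖∫ x in a..b, cexp (F x * I)‖ ≤ 4 * π * (|F' a|⁻¹ + |F' b|⁻¹) := by
  rcases hmono with hmono | hanti
  · refine (norm_integral_cexp_mul_I_le_of_monotoneOn_abs hab hF hF' hmono ha).trans ?_
    rw [div_eq_mul_inv]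
    gcongr
    exact le_add_of_nonneg_right (by positivity)
  · refine (norm_integral_cexp_mul_I_le_of_antitoneOn_abs hab hF hF' hanti hb).trans ?_
    rw [div_eq_mul_inv]
    gcongr
    exact le_add_of_nonneg_left (by positivity)

end VanDerCorput

section SeparatedPoints

open Finset

/-- Pigeonhole: distinct points of a `g`-separated family have distinct `⌊(v i - t) / g⌋`. -/
theorem card_filter_abs_sub_lt_mul_le {ι : Type*} {s : Finset ι} {v : ι → ℝ} {g : ℝ} (hg : 0 < g)
    (hsep : ∀ i ∈ s, ∀ j ∈ s, i ≠ j → g ≤ |v i - v j|) (t : ℝ) (L : ℕ) :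
    #{i ∈ s | |t - v i| < L * g} ≤ 2 * L := by
  have hmaps : MapsTo (fun i => ⌊(v i - t) / g⌋) (s.filter fun i => |t - v i| < L * g)
      (Finset.Ico (-(L : ℤ)) L) := by
    intro i hi
    rw [mem_coe, mem_filter, abs_sub_comm, abs_lt] at hi
    rw [mem_coe, Finset.mem_Ico, Int.le_floor, Int.floor_lt, le_div_iff₀ hg, div_lt_iff₀ hg]
    push_cast
    constructor <;> linarith [hi.2.1, hi.2.2]
  have hinj : InjOn (fun i => ⌊(v i - t) / g⌋) (s.filter fun i => |t - v i| < L * g) := by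
    intro i hi j hj hij
    by_contra hne
    have hclose := Int.abs_sub_lt_one_of_floor_eq_floor hij
    rw [← sub_div, sub_sub_sub_cancel_right, abs_div, abs_of_pos hg, div_lt_one hg] at hclose
    exact hclose.not_ge (hsep i (mem_filter.1 hi).1 j (mem_filter.1 hj).1 hne)
  refine (card_le_card_of_injOn _ hmaps hinj).trans_eq ?_
  rw [Int.card_Ico]
  omega

theorem sum_inv_abs_sub_le {ι : Type*} {s : Finset ι} {v : ι → ℝ} {g : ℝ} (hg : 0 < g)
    (hsep : ∀ i ∈ s, ∀ j ∈ s, i ≠ j → g ≤ |v i - v j|) (t : ℝ)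
    (hfar : ∀ i ∈ s, g ≤ |t - v i|) :
    ∑ i ∈ s, |t - v i|⁻¹ ≤ 3 * (Nat.sqrt #s + 1) / g := by
  set L := Nat.sqrt #s + 1
  have hL : (0 : ℝ) < L := by positivity
  have hnear : ∑ i ∈ s with |t - v i| < L * g, |t - v i|⁻¹ ≤ 2 * L * g⁻¹ := by
    refine (sum_le_card_nsmul _ _ g⁻¹ fun i hi => ?_).trans ?_
    · exact inv_anti₀ hg (hfar i (mem_filter.1 hi).1)
    · rw [nsmul_eq_mul]
      gcongr
      exact_mod_cast card_filter_abs_sub_lt_mul_le hg hsep t L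
  have hfar' : ∑ i ∈ s with ¬|t - v i| < L * g, |t - v i|⁻¹ ≤ L * g⁻¹ := by
    refine (sum_le_card_nsmul _ _ (L * g)⁻¹ fun i hi => ?_).trans ?_
    · exact inv_anti₀ (by positivity) (not_lt.1 (mem_filter.1 hi).2)
    · have hcard : (#s : ℝ) ≤ L * L := by exact_mod_cast (Nat.lt_succ_sqrt #s).le
      rw [nsmul_eq_mul, mul_inv, ← mul_assoc]
      gcongr
      calc (#{i ∈ s | ¬|t - v i| < L * g} : ℝ) * (L : ℝ)⁻¹ ≤ #s * (L : ℝ)⁻¹ := by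
            gcongr
            exact filter_subset _ s
        _ ≤ L := by rw [← div_eq_mul_inv, div_le_iff₀ hL]; exact hcard
  rw [← sum_filter_add_sum_filter_not s fun i => |t - v i| < L * g]
  calc _ ≤ 2 * L * g⁻¹ + L * g⁻¹ := add_le_add hnear hfar'
    _ = 3 * (Nat.sqrt #s + 1) / g := by push_cast [L]; ring

end SeparatedPoints

section MeanSquare

theorem integral_norm_sum_sq_le {α ι : Type*} [MeasurableSpace α] {μ : Measure α}
    (s : Finset ι) (z : ι → α → ℂ) (hz : ∀ i j, Integrable (fun x => z i x * conj (z j x)) μ) :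
    ∫ x, ‖∑ i ∈ s, z i x‖ ^ 2 ∂μ ≤ ∑ i ∈ s, ∑ j ∈ s, ‖∫ x, z i x * conj (z j x) ∂μ‖ := by
  have hpt : ∀ x, ‖∑ i ∈ s, z i x‖ ^ 2 = re (∑ i ∈ s, ∑ j ∈ s, z i x * conj (z j x)) := by
    intro x
    rw [← Finset.sum_mul_sum, ← map_sum, mul_conj, ofReal_re, normSq_eq_norm_sq]
  have hint : Integrable (fun x => ∑ i ∈ s, ∑ j ∈ s, z i x * conj (z j x)) μ :=
    integrable_finsetSum _ fun i _ => integrable_finsetSum _ fun j _ => hz i j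
  have hre := integral_re hint
  simp only [RCLike.re_to_complex] at hre
  simp_rw [hpt]
  rw [hre, integral_finsetSum _ fun i _ => integrable_finsetSum _ fun j _ => hz i j]
  refine (re_le_norm _).trans ((norm_sum_le _ _).trans (Finset.sum_le_sum fun i _ => ?_))
  rw [integral_finsetSum _ fun j _ => hz i j]
  exact norm_sum_le _ _

theorem cexp_two_pi_mul_I_mul_conj (r s : ℝ) :
    cexp (2 * π * I * r) * conj (cexp (2 * π * I * s)) = cexp ((2 * π * (r - s) : ℝ) * I) := by
  rw [← exp_conj, ← exp_add]
  congr 1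
  simp only [map_mul, conj_ofReal, conj_I, map_ofNat]
  push_cast
  ring

variable {a b : ℝ} {w w' : ℝ → ℝ}

theorem norm_integral_cexp_two_pi_int_mul_le (hab : a ≤ b)
    (hw : ∀ x ∈ Icc a b, HasDerivWithinAt w (w' x) (Icc a b) x) (hw' : ContinuousOn w' (Icc a b))
    (hmono : MonotoneOn (fun x => |w' x|) (Icc a b) ∨ AntitoneOn (fun x => |w' x|) (Icc a b))
    (ha : 0 < |w' a|) (hb : 0 < |w' b|) {k : ℤ} (hk : k ≠ 0) :
    ‖∫ x in a..b, cexp ((2 * π * (k * w x) : ℝ) * I)‖ ≤ 2 * (|w' a|⁻¹ + |w' b|⁻¹) := by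
  have hk1 : (1 : ℝ) ≤ |(k : ℝ)| := by exact_mod_cast Int.one_le_abs hk
  have habs : ∀ x, |2 * π * (k * w' x)| = 2 * π * |(k : ℝ)| * |w' x| := fun x => by
    simp only [abs_mul, abs_two, abs_of_pos Real.pi_pos]
    ring
  have hscale : MonotoneOn (fun x => |2 * π * (k * w' x)|) (Icc a b) ∨
      AntitoneOn (fun x => |2 * π * (k * w' x)|) (Icc a b) := by
    simp only [habs]
    refine hmono.imp (fun h x hx y hy hxy => ?_) (fun h x hx y hy hxy => ?_) <;>
      exact mul_le_mul_of_nonneg_left (h hx hy hxy) (by positivity)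
  refine (norm_integral_cexp_mul_I_le hab
    (fun x hx => ((hw x hx).const_mul (k : ℝ)).const_mul (2 * π))
    (continuousOn_const.mul (continuousOn_const.mul hw')) hscale
    (by rw [habs]; positivity) (by rw [habs]; positivity)).trans ?_
  calc 4 * π * (|2 * π * (k * w' a)|⁻¹ + |2 * π * (k * w' b)|⁻¹)
      = 2 * (|w' a|⁻¹ + |w' b|⁻¹) / |(k : ℝ)| := by
        rw [habs, habs]
        field_simp
        ring
    _ ≤ 2 * (|w' a|⁻¹ + |w' b|⁻¹) := div_le_self (by positivity) hk1

variable {u u' : ℕ → ℝ → ℝ} {g : ℝ}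

theorem sum_norm_setIntegral_cexp_sub_le (hab : a ≤ b)
    (hderiv : ∀ n, ∀ x ∈ Icc a b, HasDerivWithinAt (u n) (u' n x) (Icc a b) x)
    (hcont : ∀ n, ContinuousOn (u' n) (Icc a b)) (hg : 0 < g)
    (hmono : ∀ n m : ℕ, n ≠ m →
      MonotoneOn (fun x => |u' n x - u' m x|) (Icc a b) ∨
      AntitoneOn (fun x => |u' n x - u' m x|) (Icc a b))
    (hgap : ∀ n m : ℕ, n ≠ m → ∀ x ∈ Icc a b, g ≤ |u' n x - u' m x|)
    {k : ℤ} (hk : k ≠ 0) {N n : ℕ} (hn : n ∈ Finset.Icc 1 N) :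
    ∑ m ∈ Finset.Icc 1 N, ‖∫ x in Icc a b, cexp ((2 * π * (k * (u n x - u m x)) : ℝ) * I)‖
      ≤ (b - a + 12 / g) * (Nat.sqrt N + 1) := by
  simp_rw [integral_Icc_eq_integral_Ioc, ← intervalIntegral.integral_of_le hab]
  have hoff : ∀ m ∈ (Finset.Icc 1 N).erase n,
      ‖∫ x in a..b, cexp ((2 * π * (k * (u n x - u m x)) : ℝ) * I)‖
        ≤ 2 * (|u' n a - u' m a|⁻¹ + |u' n b - u' m b|⁻¹) := fun m hm => by
    have hnm := (Finset.ne_of_mem_erase hm).symm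
    exact norm_integral_cexp_two_pi_int_mul_le hab
      (fun x hx => (hderiv n x hx).sub (hderiv m x hx)) ((hcont n).sub (hcont m)) (hmono n m hnm)
      (hg.trans_le (hgap n m hnm a (left_mem_Icc.2 hab)))
      (hg.trans_le (hgap n m hnm b (right_mem_Icc.2 hab))) hk
  have hsep : ∀ c ∈ Icc a b, ∑ m ∈ (Finset.Icc 1 N).erase n, |u' n c - u' m c|⁻¹
      ≤ 3 * (Nat.sqrt N + 1) / g := fun c hc => by
    refine (sum_inv_abs_sub_le hg (fun i _ j _ hij => hgap i j hij c hc) _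
      fun m hm => hgap n m (Finset.ne_of_mem_erase hm).symm c hc).trans ?_
    gcongr
    exact Finset.card_erase_le.trans_eq (by rw [Nat.card_Icc, Nat.add_sub_cancel])
  rw [← Finset.add_sum_erase _ _ hn]
  calc _ ≤ (b - a) + ∑ m ∈ (Finset.Icc 1 N).erase n,
        2 * (|u' n a - u' m a|⁻¹ + |u' n b - u' m b|⁻¹) :=
        add_le_add (norm_integral_cexp_mul_I_le_sub hab) (Finset.sum_le_sum hoff)
    _ = (b - a) + 2 * (∑ m ∈ (Finset.Icc 1 N).erase n, |u' n a - u' m a|⁻¹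
        + ∑ m ∈ (Finset.Icc 1 N).erase n, |u' n b - u' m b|⁻¹) := by
        rw [← Finset.sum_add_distrib, Finset.mul_sum]
    _ ≤ (b - a) + 2 * (3 * (Nat.sqrt N + 1) / g + 3 * (Nat.sqrt N + 1) / g) := by
        gcongr
        exacts [hsep a (left_mem_Icc.2 hab), hsep b (right_mem_Icc.2 hab)]
    _ ≤ (b - a + 12 / g) * (Nat.sqrt N + 1) := by
        have : 0 ≤ (b - a) * Nat.sqrt N := mul_nonneg (sub_nonneg.2 hab) (Nat.cast_nonneg _)
        field_simp
        nlinarith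

theorem integral_norm_weylAvg_sq_le (hab : a ≤ b)
    (hderiv : ∀ n, ∀ x ∈ Icc a b, HasDerivWithinAt (u n) (u' n x) (Icc a b) x)
    (hcont : ∀ n, ContinuousOn (u' n) (Icc a b)) (hg : 0 < g)
    (hmono : ∀ n m : ℕ, n ≠ m →
      MonotoneOn (fun x => |u' n x - u' m x|) (Icc a b) ∨
      AntitoneOn (fun x => |u' n x - u' m x|) (Icc a b))
    (hgap : ∀ n m : ℕ, n ≠ m → ∀ x ∈ Icc a b, g ≤ |u' n x - u' m x|)
    {k : ℤ} (hk : k ≠ 0) (N : ℕ) :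
    ∫ x in Icc a b, ‖weylAvg (fun n => k * u n x) N‖ ^ 2
      ≤ (b - a + 12 / g) * (Nat.sqrt N + 1) / N := by
  set z : ℕ → ℝ → ℂ := fun n x => cexp (2 * π * I * (k * u n x : ℝ))
  have hz : ∀ n m x, z n x * conj (z m x) = cexp ((2 * π * (k * (u n x - u m x)) : ℝ) * I) :=
    fun n m x => by rw [cexp_two_pi_mul_I_mul_conj, mul_sub (k : ℝ)]
  have hucont : ∀ n, ContinuousOn (u n) (Icc a b) :=
    fun n x hx => (hderiv n x hx).continuousWithinAt
  have hint : ∀ n m, Integrable (fun x => z n x * conj (z m x)) (volume.restrict (Icc a b)) := by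
    intro n m
    simp_rw [hz]
    refine ContinuousOn.integrableOn_compact isCompact_Icc ?_
    fun_prop
  have hW : ∀ x, ‖weylAvg (fun n => k * u n x) N‖ ^ 2
      = ((N : ℝ)⁻¹) ^ 2 * ‖∑ n ∈ Finset.Icc 1 N, z n x‖ ^ 2 := fun x => by
    rw [weylAvg, norm_mul, mul_pow, norm_inv, Complex.norm_natCast]
  calc ∫ x in Icc a b, ‖weylAvg (fun n => k * u n x) N‖ ^ 2
      = ((N : ℝ)⁻¹) ^ 2 * ∫ x in Icc a b, ‖∑ n ∈ Finset.Icc 1 N, z n x‖ ^ 2 := by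
        simp_rw [hW]
        exact integral_const_mul _ _
    _ ≤ ((N : ℝ)⁻¹) ^ 2 * ∑ n ∈ Finset.Icc 1 N, ∑ m ∈ Finset.Icc 1 N,
          ‖∫ x in Icc a b, z n x * conj (z m x)‖ := by
        gcongr
        exact integral_norm_sum_sq_le _ z hint
    _ ≤ ((N : ℝ)⁻¹) ^ 2 * (N * ((b - a + 12 / g) * (Nat.sqrt N + 1))) := by
        gcongr
        simp_rw [hz]
        simpa using Finset.sum_le_card_nsmul _ _ _ fun n hn =>
          sum_norm_setIntegral_cexp_sub_le hab hderiv hcont hg hmono hgap hk hn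
    _ = (b - a + 12 / g) * (Nat.sqrt N + 1) / N := by
        rcases eq_or_ne N 0 with rfl | hN
        · simp
        · field_simp

end MeanSquare

section Subsequence

theorem sum_Icc_cexp_eq_mul_weylAvg (v : ℕ → ℝ) (K : ℕ) :
    ∑ n ∈ Finset.Icc 1 K, cexp (2 * π * I * v n) = K * weylAvg v K := by
  rcases eq_or_ne K 0 with rfl | hK
  · simp
  · rw [weylAvg, ← mul_assoc, mul_inv_cancel₀ (Nat.cast_ne_zero.2 hK), one_mul]

theorem norm_weylAvg_le_of_le (v : ℕ → ℝ) {K N : ℕ} (hKN : K ≤ N) :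
    ‖weylAvg v N‖ ≤ ‖weylAvg v K‖ + (1 - K / N) := by
  rcases Nat.eq_zero_or_pos N with rfl | hN
  · obtain rfl := Nat.le_zero.1 hKN
    simp [weylAvg]
  have hN' : (0 : ℝ) < N := by exact_mod_cast hN
  have hsplit : ∑ n ∈ Finset.Icc 1 N, cexp (2 * π * I * v n)
      = K * weylAvg v K + ∑ n ∈ Finset.Ioc K N, cexp (2 * π * I * v n) := by
    have hIoc : ∀ M, Finset.Icc 1 M = Finset.Ioc 0 M := Finset.Icc_add_one_left_eq_Ioc 0
    rw [← sum_Icc_cexp_eq_mul_weylAvg, hIoc, hIoc, Finset.sum_Ioc_consecutive _ (Nat.zero_le K) hKN]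
  have htail : ‖∑ n ∈ Finset.Ioc K N, cexp (2 * π * I * v n)‖ ≤ N - K := by
    refine (norm_sum_le _ _).trans_eq ?_
    simp [norm_exp, Nat.cast_sub hKN]
  have hK : (K : ℝ) / N ≤ 1 := div_le_one_of_le₀ (by exact_mod_cast hKN) hN'.le
  calc ‖weylAvg v N‖ ≤ (N : ℝ)⁻¹ * (K * ‖weylAvg v K‖ + (N - K)) := by
        rw [weylAvg, hsplit, norm_mul, norm_inv, Complex.norm_natCast]
        gcongr
        exact (norm_add_le _ _).trans (add_le_add (by simp) htail)
    _ = K / N * ‖weylAvg v K‖ + (1 - K / N) := by field_simp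
    _ ≤ ‖weylAvg v K‖ + (1 - K / N) := by
        gcongr
        exact mul_le_of_le_one_left (norm_nonneg _) hK

theorem Nat.sqrt_sqrt_pow_four_le (N : ℕ) : Nat.sqrt (Nat.sqrt N) ^ 4 ≤ N :=
  calc Nat.sqrt (Nat.sqrt N) ^ 4 = (Nat.sqrt (Nat.sqrt N) ^ 2) ^ 2 := by ring
    _ ≤ Nat.sqrt N ^ 2 := Nat.pow_le_pow_left (Nat.sqrt_le' _) 2
    _ ≤ N := Nat.sqrt_le' N

theorem Nat.lt_sqrt_sqrt_add_one_pow_four (N : ℕ) : N < (Nat.sqrt (Nat.sqrt N) + 1) ^ 4 :=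
  calc N < (Nat.sqrt N + 1) ^ 2 := Nat.lt_succ_sqrt' N
    _ ≤ ((Nat.sqrt (Nat.sqrt N) + 1) ^ 2) ^ 2 :=
      Nat.pow_le_pow_left (Nat.lt_succ_sqrt' _) 2
    _ = (Nat.sqrt (Nat.sqrt N) + 1) ^ 4 := by ring

theorem Nat.tendsto_sqrt_atTop : Tendsto Nat.sqrt atTop atTop :=
  tendsto_atTop_atTop.2 fun B => ⟨B ^ 2, fun _ hN => Nat.le_sqrt'.2 hN⟩

theorem tendsto_weylAvg_of_tendsto_pow_four (v : ℕ → ℝ)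
    (h : Tendsto (fun M : ℕ => weylAvg v (M ^ 4)) atTop (𝓝 0)) :
    Tendsto (weylAvg v) atTop (𝓝 0) := by
  set m : ℕ → ℕ := fun N => Nat.sqrt (Nat.sqrt N)
  have hm : Tendsto m atTop atTop := Nat.tendsto_sqrt_atTop.comp Nat.tendsto_sqrt_atTop
  have hbound : ∀ᶠ N in atTop,
      ‖weylAvg v N‖ ≤ ‖weylAvg v (m N ^ 4)‖ + (1 - ((m N : ℝ) / (m N + 1)) ^ 4) := by
    filter_upwards [eventually_gt_atTop 0] with N hN
    refine (norm_weylAvg_le_of_le v (Nat.sqrt_sqrt_pow_four_le N)).trans ?_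
    gcongr
    rw [div_pow]
    push_cast
    gcongr
    exact_mod_cast (Nat.lt_sqrt_sqrt_add_one_pow_four N).le
  have hlim : Tendsto (fun N => ‖weylAvg v (m N ^ 4)‖ + (1 - ((m N : ℝ) / (m N + 1)) ^ 4))
      atTop (𝓝 0) := by
    have hratio := ((tendsto_natCast_div_add_atTop (1 : ℝ)).pow 4).comp hm
    simpa using (h.norm.comp hm).add (hratio.const_sub 1)
  rw [tendsto_zero_iff_norm_tendsto_zero]
  exact squeeze_zero' (Eventually.of_forall fun N => norm_nonneg _) hbound hlim

end Subsequence

theorem ae_tendsto_zero_of_summable_integral {α : Type*} [MeasurableSpace α] {μ : Measure α}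
    {f : ℕ → α → ℝ} (hf : ∀ n x, 0 ≤ f n x) (hint : ∀ n, Integrable (f n) μ)
    (hsum : Summable fun n => ∫ x, f n x ∂μ) :
    ∀ᵐ x ∂μ, Tendsto (fun n => f n x) atTop (𝓝 0) := by
  have hnorm : ∀ n, eLpNorm (f n) 1 μ = ENNReal.ofReal (∫ x, f n x ∂μ) := fun n => by
    rw [eLpNorm_one_eq_lintegral_enorm,
      ofReal_integral_eq_lintegral_ofReal (hint n) (ae_of_all _ (hf n))]
    simp_rw [Real.enorm_eq_ofReal (hf n _)]
  have hfin : ∑' n, eLpNorm (f n) 1 μ ≠ ⊤ := by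
    simp_rw [hnorm]
    rw [← ENNReal.ofReal_tsum_of_nonneg (fun n => integral_nonneg (hf n)) hsum]
    exact ENNReal.ofReal_ne_top
  filter_upwards [summable_norm_of_tsum_eLpNorm_ne_top le_rfl
    (fun n => (hint n).aestronglyMeasurable) hfin] with x hx
  exact tendsto_zero_iff_norm_tendsto_zero.2 hx.tendsto_atTop_zero

section WeylSums

variable {a b g : ℝ} {u u' : ℕ → ℝ → ℝ}

theorem ae_tendsto_weylAvg_pow_four (hab : a ≤ b)
    (hderiv : ∀ n, ∀ x ∈ Icc a b, HasDerivWithinAt (u n) (u' n x) (Icc a b) x)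
    (hcont : ∀ n, ContinuousOn (u' n) (Icc a b)) (hg : 0 < g)
    (hmono : ∀ n m : ℕ, n ≠ m →
      MonotoneOn (fun x => |u' n x - u' m x|) (Icc a b) ∨
      AntitoneOn (fun x => |u' n x - u' m x|) (Icc a b))
    (hgap : ∀ n m : ℕ, n ≠ m → ∀ x ∈ Icc a b, g ≤ |u' n x - u' m x|)
    {k : ℤ} (hk : k ≠ 0) :
    ∀ᵐ x ∂volume.restrict (Icc a b),
      Tendsto (fun M : ℕ => weylAvg (fun n => k * u n x) (M ^ 4)) atTop (𝓝 0) := by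
  have hucont : ∀ n, ContinuousOn (u n) (Icc a b) :=
    fun n x hx => (hderiv n x hx).continuousWithinAt
  have hint : ∀ N, Integrable (fun x => ‖weylAvg (fun n => k * u n x) N‖ ^ 2)
      (volume.restrict (Icc a b)) := fun N => by
    refine ContinuousOn.integrableOn_compact isCompact_Icc ?_
    simp only [weylAvg]
    fun_prop
  have hle : ∀ M : ℕ, ∫ x in Icc a b, ‖weylAvg (fun n => k * u n x) (M ^ 4)‖ ^ 2
      ≤ (b - a + 12 / g) * (1 / (M : ℝ) ^ 2 + 1 / (M : ℝ) ^ 4) := fun M => by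
    refine (integral_norm_weylAvg_sq_le hab hderiv hcont hg hmono hgap hk (M ^ 4)).trans_eq ?_
    rw [show M ^ 4 = (M ^ 2) ^ 2 by ring, Nat.sqrt_eq']
    rcases eq_or_ne M 0 with rfl | hM
    · simp
    · push_cast
      field_simp
  have hsum : Summable fun M : ℕ => (b - a + 12 / g) * (1 / (M : ℝ) ^ 2 + 1 / (M : ℝ) ^ 4) :=
    ((Real.summable_one_div_nat_pow.2 one_lt_two).add
      (Real.summable_one_div_nat_pow.2 (by norm_num))).mul_left _
  filter_upwards [ae_tendsto_zero_of_summable_integral (fun _ _ => by positivity) (fun M => hint (M ^ 4))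
    (hsum.of_nonneg_of_le (fun _ => integral_nonneg fun _ => by positivity) hle)] with x hx
  rw [tendsto_zero_iff_norm_tendsto_zero]
  simpa [Real.sqrt_sq (norm_nonneg _)] using hx.sqrt

end WeylSums

theorem stmt3 (a b : ℝ) (hab : a < b) (u u' : ℕ → ℝ → ℝ)
    (hderiv : ∀ n, ∀ x ∈ Set.Icc a b, HasDerivWithinAt (u n) (u' n x) (Set.Icc a b) x)
    (hcont : ∀ n, ContinuousOn (u' n) (Set.Icc a b))
    (g : ℝ) (hg : 0 < g)
    (hmono : ∀ n m : ℕ, n ≠ m →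
      MonotoneOn (fun x => |u' n x - u' m x|) (Set.Icc a b) ∨
      AntitoneOn (fun x => |u' n x - u' m x|) (Set.Icc a b))
    (hgap : ∀ n m : ℕ, n ≠ m → ∀ x ∈ Set.Icc a b, g ≤ |u' n x - u' m x|) :
    ∀ᵐ x ∂(volume : Measure ℝ), x ∈ Set.Icc a b → UDmod1 (fun n => u n x) := by
  have hweyl : ∀ k : ℤ, ∀ᵐ x ∂volume.restrict (Icc a b),
      k ≠ 0 → Tendsto (weylAvg fun n => k * u n x) atTop (𝓝 0) := fun k => by
    rcases eq_or_ne k 0 with rfl | hk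
    · exact ae_of_all _ fun _ h => absurd rfl h
    · filter_upwards [ae_tendsto_weylAvg_pow_four hab.le hderiv hcont hg hmono hgap hk]
        with x hx _
      exact tendsto_weylAvg_of_tendsto_pow_four _ hx
  exact (ae_restrict_iff' measurableSet_Icc).1 (ae_all_iff.2 hweyl)
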